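/- Let S_a, S_b be score random variables with continuous strictly increasing CDFs F_a, F_b on [0,1], and define the calibrated score for group a by T_a(x) = α·x + (1−α)·Q_b(F_a(x)) and for group b by T_b(x) = α·Q_a(F_b(x)) + (1−α)·x, where Q_g = F_g^{-1}. Then T_a(S_a) and T_b(S_b) have the same distribution. -/

import Mathlib

/-!
Let `F` be the CDF of a score `S` with values in `[0,1]`, strictly increasing there, with a
right inverse `Q`. Then `F(S)` is uniformly distributed on `(0,1]` (probability integral
transform). Since `Q_a (F_a x) = x`, the calibrated score of group `a` is `G (F_a (S_a))` with
`G p = α Q_a(p) + (1 - α) Q_b(p)`, and symmetrically for group `b`; so both calibrated scores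
are the image of the uniform law under the same map `G`. The quantile functions are monotone on
`(0,1)`, which makes `G` measurable for that law.
-/

open MeasureTheory Set

section CDF

variable {Ω : Type*} [MeasurableSpace Ω] {μ : Measure Ω} {S : Ω → ℝ} {F Q : ℝ → ℝ}

theorem measure_le_eq_ofReal_cdf [IsFiniteMeasure μ]
    (hF : ∀ x, F x = (μ {ω | S ω ≤ x}).toReal) (x : ℝ) :
    μ {ω | S ω ≤ x} = ENNReal.ofReal (F x) := by
  rw [hF, ENNReal.ofReal_toReal (measure_ne_top μ _)]

theorem cdf_monotone [IsFiniteMeasure μ] (hF : ∀ x, F x = (μ {ω | S ω ≤ x}).toReal) :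
    Monotone F := fun x y hxy => by
  rw [hF, hF]
  exact ENNReal.toReal_mono (measure_ne_top μ _)
    (measure_mono fun ω (h : S ω ≤ x) => h.trans hxy)

theorem cdf_eq_zero_of_neg (hF : ∀ x, F x = (μ {ω | S ω ≤ x}).toReal)
    (hS : ∀ ω, 0 ≤ S ω) {x : ℝ} (hx : x < 0) : F x = 0 := by
  have : {ω | S ω ≤ x} = ∅ := eq_empty_of_forall_notMem fun ω h => (hx.trans_le (hS ω)).not_ge h
  rw [hF, this, measure_empty, ENNReal.toReal_zero]

theorem cdf_eq_one_of_one_le [IsProbabilityMeasure μ]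
    (hF : ∀ x, F x = (μ {ω | S ω ≤ x}).toReal)
    (hS : ∀ ω, S ω ≤ 1) {x : ℝ} (hx : 1 ≤ x) : F x = 1 := by
  have : {ω | S ω ≤ x} = univ := eq_univ_of_forall fun ω => (hS ω).trans hx
  rw [hF, this, measure_univ, ENNReal.toReal_one]

theorem cdf_mem_Icc [IsProbabilityMeasure μ] (hF : ∀ x, F x = (μ {ω | S ω ≤ x}).toReal)
    (hS : ∀ ω, S ω ≤ 1) (x : ℝ) : F x ∈ Icc (0:ℝ) 1 :=
  ⟨(hF x).symm ▸ ENNReal.toReal_nonneg,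
    (cdf_monotone hF (le_max_left x 1)).trans_eq (cdf_eq_one_of_one_le hF hS (le_max_right x 1))⟩

variable [IsProbabilityMeasure μ] (hF : ∀ x, F x = (μ {ω | S ω ≤ x}).toReal)
  (hS : ∀ ω, S ω ∈ Icc (0:ℝ) 1) (hm : StrictMonoOn F (Icc (0:ℝ) 1))
  (hFQ : ∀ p ∈ Icc (0:ℝ) 1, F (Q p) = p)
include hF hS hFQ

theorem quantile_mem_Icc {p : ℝ} (hp : p ∈ Ioo (0:ℝ) 1) : Q p ∈ Icc (0:ℝ) 1 := by
  have hQp := hFQ p (Ioo_subset_Icc_self hp)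
  constructor
  · by_contra! h
    exact hp.1.ne (by rw [← hQp, cdf_eq_zero_of_neg hF (fun ω => (hS ω).1) h])
  · by_contra! h
    exact hp.2.ne (by rw [← hQp, cdf_eq_one_of_one_le hF (fun ω => (hS ω).2) h.le])

include hm

theorem quantile_monotoneOn : MonotoneOn Q (Ioo (0:ℝ) 1) := fun p hp q hq hpq => by
  rwa [← hm.le_iff_le (quantile_mem_Icc hF hS hFQ hp) (quantile_mem_Icc hF hS hFQ hq),
    hFQ p (Ioo_subset_Icc_self hp), hFQ q (Ioo_subset_Icc_self hq)]

theorem cdf_zero : F 0 = 0 := by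
  -- otherwise `F 0 ≤ F (Q (F 0 / 2)) = F 0 / 2`
  obtain ⟨h0, h1⟩ := cdf_mem_Icc hF (fun ω => (hS ω).2) 0
  by_contra hne
  have hp : F 0 / 2 ∈ Ioo (0:ℝ) 1 := ⟨by positivity, by linarith⟩
  have hQ := quantile_mem_Icc hF hS hFQ hp
  have := hm.monotoneOn (left_mem_Icc.mpr zero_le_one) hQ hQ.1
  rw [hFQ _ (Ioo_subset_Icc_self hp)] at this
  linarith [h0.lt_of_ne' hne]

theorem quantile_aemeasurable : AEMeasurable Q (volume.restrict (Ioc (0:ℝ) 1)) := by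
  rw [← Measure.restrict_congr_set Ioo_ae_eq_Ioc]
  exact aemeasurable_restrict_of_monotoneOn measurableSet_Ioo (quantile_monotoneOn hF hS hm hFQ)

theorem measure_cdf_comp_le_of_nonpos {t : ℝ} (ht : t ≤ 0) : μ {ω | F (S ω) ≤ t} = 0 := by
  refine measure_mono_null (t := {ω | S ω ≤ 0}) (fun ω (hω : F (S ω) ≤ t) => ?_) ?_
  · change S ω ≤ 0
    by_contra! h
    have := hm (left_mem_Icc.mpr zero_le_one) (hS ω) h
    linarith [cdf_zero hF hS hm hFQ]
  · rw [measure_le_eq_ofReal_cdf hF, cdf_zero hF hS hm hFQ, ENNReal.ofReal_zero]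

theorem setOf_cdf_comp_le_eq {t : ℝ} (ht : t ∈ Ioo (0:ℝ) 1) :
    {ω | F (S ω) ≤ t} = {ω | S ω ≤ Q t} := by
  ext ω
  have hQ := quantile_mem_Icc hF hS hFQ ht
  show F (S ω) ≤ t ↔ S ω ≤ Q t
  rw [← hm.le_iff_le (hS ω) hQ, hFQ t (Ioo_subset_Icc_self ht)]

theorem map_cdf_comp_eq_uniform (hSm : Measurable S) :
    μ.map (fun ω => F (S ω)) = volume.restrict (Ioc (0:ℝ) 1) := by
  have hU : Measurable fun ω => F (S ω) := (cdf_monotone hF).measurable.comp hSm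
  refine Measure.ext_of_Iic _ _ fun t => ?_
  rw [Measure.map_apply hU measurableSet_Iic, Measure.restrict_apply measurableSet_Iic]
  change μ {ω | F (S ω) ≤ t} = volume (Iic t ∩ Ioc 0 1)
  rcases le_or_gt 1 t with ht1 | ht1
  · have : {ω | F (S ω) ≤ t} = univ :=
      eq_univ_of_forall fun ω => (cdf_mem_Icc hF (fun ω => (hS ω).2) _).2.trans ht1
    rw [this, measure_univ, inter_eq_right.mpr (Ioc_subset_Iic_self.trans (Iic_subset_Iic.mpr ht1)),
      Real.volume_Ioc, sub_zero, ENNReal.ofReal_one]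
  rw [Iic_inter_Ioc_of_le ht1.le, Real.volume_Ioc, sub_zero]
  rcases le_or_gt t 0 with ht0 | ht0
  · rw [measure_cdf_comp_le_of_nonpos hF hS hm hFQ ht0, ENNReal.ofReal_of_nonpos ht0]
  · rw [setOf_cdf_comp_le_eq hF hS hm hFQ ⟨ht0, ht1⟩, measure_le_eq_ofReal_cdf hF,
      hFQ t ⟨ht0.le, ht1.le⟩]

theorem map_comp_cdf_comp_eq (hSm : Measurable S) {G : ℝ → ℝ}
    (hG : AEMeasurable G (volume.restrict (Ioc (0:ℝ) 1))) :
    μ.map (fun ω => G (F (S ω))) = (volume.restrict (Ioc (0:ℝ) 1)).map G := by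
  rw [← map_cdf_comp_eq_uniform hF hS hm hFQ hSm] at hG ⊢
  exact (hG.map_map_of_aemeasurable ((cdf_monotone hF).measurable.comp hSm).aemeasurable).symm

end CDF

theorem calibrated_scores_same_distribution_general
    {Ω : Type*} [MeasurableSpace Ω] (μ : Measure Ω) [IsProbabilityMeasure μ]
    (Sa Sb : Ω → ℝ) (hSa : Measurable Sa) (hSb : Measurable Sb)
    (hSa01 : ∀ ω, Sa ω ∈ Icc (0:ℝ) 1) (hSb01 : ∀ ω, Sb ω ∈ Icc (0:ℝ) 1)
    (Fa Fb Qa Qb : ℝ → ℝ)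
    (hFa : ∀ x, Fa x = (μ {ω | Sa ω ≤ x}).toReal)
    (hFb : ∀ x, Fb x = (μ {ω | Sb ω ≤ x}).toReal)
    (hma : StrictMonoOn Fa (Icc (0:ℝ) 1)) (hmb : StrictMonoOn Fb (Icc (0:ℝ) 1))
    (hQa : ∀ x ∈ Icc (0:ℝ) 1, Qa (Fa x) = x)
    (hQb : ∀ x ∈ Icc (0:ℝ) 1, Qb (Fb x) = x)
    (hQa' : ∀ p ∈ Icc (0:ℝ) 1, Fa (Qa p) = p)
    (hQb' : ∀ p ∈ Icc (0:ℝ) 1, Fb (Qb p) = p)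
    (α : ℝ) :
    μ.map (fun ω => α * Sa ω + (1 - α) * Qb (Fa (Sa ω)))
      = μ.map (fun ω => α * Qa (Fb (Sb ω)) + (1 - α) * Sb ω) := by
  let G p := α * Qa p + (1 - α) * Qb p
  have hG : AEMeasurable G (volume.restrict (Ioc (0:ℝ) 1)) :=
    ((quantile_aemeasurable hFa hSa01 hma hQa').const_mul α).add
      ((quantile_aemeasurable hFb hSb01 hmb hQb').const_mul (1 - α))
  calc μ.map (fun ω => α * Sa ω + (1 - α) * Qb (Fa (Sa ω)))
      = μ.map (fun ω => G (Fa (Sa ω))) := by simp only [G, hQa _ (hSa01 _)]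
    _ = μ.map (fun ω => G (Fb (Sb ω))) := by
      rw [map_comp_cdf_comp_eq hFa hSa01 hma hQa' hSa hG,
        map_comp_cdf_comp_eq hFb hSb01 hmb hQb' hSb hG]
    _ = μ.map (fun ω => α * Qa (Fb (Sb ω)) + (1 - α) * Sb ω) := by simp only [G, hQb _ (hSb01 _)]

/-- with continuous strictly increasing group CDFs `F_a`, `F_b`
on `[0,1]` with inverses (quantile functions) `Q_a`, `Q_b`, the calibrated
scores `T_a(S_a) = α·S_a + (1−α)·Q_b(F_a(S_a))` and
`T_b(S_b) = α·Q_a(F_b(S_b)) + (1−α)·S_b` have the same distribution. -/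
theorem calibrated_scores_same_distribution
    {Ω : Type*} [MeasurableSpace Ω] (μ : Measure Ω) [IsProbabilityMeasure μ]
    (Sa Sb : Ω → ℝ) (hSa : Measurable Sa) (hSb : Measurable Sb)
    (hSa01 : ∀ ω, Sa ω ∈ Icc (0:ℝ) 1) (hSb01 : ∀ ω, Sb ω ∈ Icc (0:ℝ) 1)
    (Fa Fb Qa Qb : ℝ → ℝ)
    (hFa : ∀ x, Fa x = (μ {ω | Sa ω ≤ x}).toReal)
    (hFb : ∀ x, Fb x = (μ {ω | Sb ω ≤ x}).toReal)
    (hca : ContinuousOn Fa (Icc (0:ℝ) 1)) (hcb : ContinuousOn Fb (Icc (0:ℝ) 1))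
    (hma : StrictMonoOn Fa (Icc (0:ℝ) 1)) (hmb : StrictMonoOn Fb (Icc (0:ℝ) 1))
    (hQa : ∀ x ∈ Icc (0:ℝ) 1, Qa (Fa x) = x)
    (hQb : ∀ x ∈ Icc (0:ℝ) 1, Qb (Fb x) = x)
    (hQa' : ∀ p ∈ Icc (0:ℝ) 1, Fa (Qa p) = p)
    (hQb' : ∀ p ∈ Icc (0:ℝ) 1, Fb (Qb p) = p)
    (α : ℝ) (hα : α ∈ Icc (0:ℝ) 1) :
    μ.map (fun ω => α * Sa ω + (1 - α) * Qb (Fa (Sa ω)))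
      = μ.map (fun ω => α * Qa (Fb (Sb ω)) + (1 - α) * Sb ω) :=
  calibrated_scores_same_distribution_general μ Sa Sb hSa hSb hSa01 hSb01 Fa Fb Qa Qb hFa hFb hma
    hmb hQa hQb hQa' hQb' α
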